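/- arXiv:hep-th/9312065 — 4 statements merged into one kernel-verified Lean document; each statement's English description precedes it below -/
import Mathlib

section
/- In the affine Kac-Moody superalgebra with odd generators ē_alpha(n) satisfying [ā(m), b̄(n)]_+ = δ_{m+n+1,0}(a,b)k and [a(m), b̄(n)] = \overline{[a,b]}(m+n), with root vectors normalized so that [e_alpha, e_{-alpha}] = -alpha, [e_{-gamma_i}, e_theta] = e_{beta_i}, [e_{-beta_i}, e_theta] = -e_{gamma_i}, one has for all n >= 0: ē_{-beta_i} ē_{-gamma_i} · e_theta(-1)^n · 1 = n(k + h^v) e_theta(-1)^{n-1} · 1 + n(n-1) e_theta(-1)^{n-2} ē_{beta_i}(-1) ē_{gamma_i}(-1) · 1, where k acts as the scalar k + h^v on the vacuum 1 (and terms with negative powers of e_theta(-1) are zero). -/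
/-- In the vacuum module `M_{k,0}` over the affine Kac–Moody
superalgebra, with root vectors normalized so that `[e_α, e_{-α}] = -α`,
`[e_{-γᵢ}, e_θ] = e_{βᵢ}`, `[e_{-βᵢ}, e_θ] = -e_{γᵢ}`, one has for all `n ≥ 0`
`ē_{-βᵢ} ē_{-γᵢ} e_θ(-1)ⁿ 1 = n(k+h^∨) e_θ(-1)^{n-1} 1
  + n(n-1) e_θ(-1)^{n-2} ē_{βᵢ}(-1) ē_{γᵢ}(-1) 1`.

Below `E = e_θ(-1)`, `A = ē_{-βᵢ}(0)`, `B = ē_{-γᵢ}(0)`, `Pb = ē_{βᵢ}(-1)`,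
`Pg = ē_{γᵢ}(-1)`, `v0 = 1` is the vacuum, and `khv` is the scalar `k + h^∨` by which
the central element `k` acts.  The hypotheses are the (super)commutation relations
`[a(m), b̄(n)] = \overline{[a,b]}(m+n)` and `[ā(m), b̄(n)]₊ = δ_{m+n+1,0}(a,b) k` of the
affine superalgebra, specialized to these elements. -/
theorem affine_super_singular_vector_step
    {M : Type*} [AddCommGroup M] [Module ℂ M]
    (E A B Pb Pg : Module.End ℂ M) (v0 : M) (khv : ℂ)
    (hEA : E * A - A * E = Pg)         -- [e_θ(-1), ē_{-β}] = ē_γ(-1)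
    (hEB : E * B - B * E = -Pb)        -- [e_θ(-1), ē_{-γ}] = -ē_β(-1)
    (hPbE : Pb * E = E * Pb)           -- [e_θ(-1), ē_β(-1)] = 0
    (hPgE : Pg * E = E * Pg)           -- [e_θ(-1), ē_γ(-1)] = 0
    (hAPb : A * Pb + Pb * A = khv • (1 : Module.End ℂ M))
                                        -- [ē_{-β}(0), ē_β(-1)]₊ = (e_{-β}, e_β) k
    (hAPg : A * Pg + Pg * A = 0)       -- [ē_{-β}(0), ē_γ(-1)]₊ = 0
    (hPbPg : Pg * Pb = -(Pb * Pg))     -- [ē_β(-1), ē_γ(-1)]₊ = 0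
    (hA0 : A v0 = 0) (hB0 : B v0 = 0)  -- `ē_{-α}(0)` annihilates the vacuum
    : ∀ n : ℕ,
      A (B ((E ^ n) v0)) =
        ((n : ℂ) * khv) • (E ^ (n - 1)) v0 +
        ((n : ℂ) * ((n : ℂ) - 1)) • (E ^ (n - 2)) (Pb (Pg v0)) := by
  -- commutation of powers
  have hPbEn : ∀ n : ℕ, Pb * E ^ n = E ^ n * Pb := fun n =>
    (Commute.pow_right hPbE n)
  have hPgEn : ∀ n : ℕ, Pg * E ^ n = E ^ n * Pg := fun n =>
    (Commute.pow_right hPgE n)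
  -- Lemma 1 : B (Eⁿ v0) = n • E^{n-1} (Pb v0)
  have L1 : ∀ n : ℕ, B ((E ^ n) v0) = (n : ℂ) • (E ^ (n - 1)) (Pb v0) := by
    intro n
    induction n with
    | zero => simp [hB0]
    | succ m ih =>
      have hBE : B * E = E * B + Pb := by
        have h : B * E - E * B = Pb := by
          have := congrArg Neg.neg hEB
          simpa [neg_sub] using this
        rw [← h]; abel
      have h1 : B ((E ^ (m + 1)) v0) = E (B ((E ^ m) v0)) + Pb ((E ^ m) v0) := by
        have : (E ^ (m + 1)) v0 = E ((E ^ m) v0) := by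
          rw [pow_succ']; rfl
        rw [this]
        have := congrArg (fun f : Module.End ℂ M => f ((E ^ m) v0)) hBE
        simpa using this
      rw [h1, ih]
      have h2 : Pb ((E ^ m) v0) = (E ^ m) (Pb v0) := by
        have := congrArg (fun f : Module.End ℂ M => f v0) (hPbEn m)
        simpa using this
      rcases m with _ | k
      · simp [h2]
      · have h3 : E ((E ^ (k + 1 - 1)) (Pb v0)) = (E ^ (k + 1)) (Pb v0) := by
          simp only [Nat.add_sub_cancel]
          rw [show E ((E ^ k) (Pb v0)) = (E * E ^ k) (Pb v0) from rfl, ← pow_succ']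
        rw [map_smul, h3, h2, Nat.add_sub_cancel]
        push_cast
        module
  -- Lemma 2 : A (E^m x) = E^m (A x) - m • E^{m-1} (Pg x)
  have L2 : ∀ (m : ℕ) (x : M), A ((E ^ m) x) = (E ^ m) (A x) - (m : ℂ) • (E ^ (m - 1)) (Pg x) := by
    intro m
    induction m with
    | zero => intro x; simp
    | succ k ih =>
      intro x
      have hAE : A * E = E * A - Pg := by
        rw [← hEA]; abel
      have h1 : A ((E ^ (k + 1)) x) = E (A ((E ^ k) x)) - Pg ((E ^ k) x) := by
        have hx : (E ^ (k + 1)) x = E ((E ^ k) x) := by rw [pow_succ']; rfl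
        rw [hx]
        have := congrArg (fun f : Module.End ℂ M => f ((E ^ k) x)) hAE
        simpa using this
      rw [h1, ih]
      have h2 : Pg ((E ^ k) x) = (E ^ k) (Pg x) := by
        have := congrArg (fun f : Module.End ℂ M => f x) (hPgEn k)
        simpa using this
      have hEk : E ((E ^ k) (A x)) = (E ^ (k + 1)) (A x) := by
        rw [show E ((E ^ k) (A x)) = (E * E ^ k) (A x) from rfl, ← pow_succ']
      rcases k with _ | j
      · simp [h2, hEk]
      · have h3 : E ((E ^ (j + 1 - 1)) (Pg x)) = (E ^ (j + 1)) (Pg x) := by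
          simp only [Nat.add_sub_cancel]
          rw [show E ((E ^ j) (Pg x)) = (E * E ^ j) (Pg x) from rfl, ← pow_succ']
        rw [map_sub, map_smul, h3, h2, hEk, Nat.add_sub_cancel]
        push_cast
        module
  -- key evaluations
  have hAPbv : A (Pb v0) = khv • v0 := by
    have := congrArg (fun f : Module.End ℂ M => f v0) hAPb
    simp only [LinearMap.add_apply, Module.End.mul_apply, LinearMap.smul_apply,
      Module.End.one_apply, hA0, map_zero, add_zero] at this
    simpa using this
  have hPgPbv : Pg (Pb v0) = -(Pb (Pg v0)) := by
    have := congrArg (fun f : Module.End ℂ M => f v0) hPbPg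
    simpa using this
  intro n
  rcases n with _ | m
  · simp [hB0]
  · rw [L1, map_smul, Nat.add_sub_cancel, L2, hAPbv, hPgPbv, map_neg, map_smul,
      show m + 1 - 2 = m - 1 from rfl]
    push_cast
    rcases m with _ | j
    · simp
    · push_cast
      module
end

section
/- Consider the Neveu-Schwarz module with c = 7/10 (the (p,q) = (5,3) case). The vector v = 3 L_{-4} 1 + 10 (L_{-2})^2 1 - 15 G_{-5/2} G_{-3/2} 1 in the vacuum Verma module M(7/10, 0) modulo G_{-1/2}1 is a singular vector: it is annihilated by L_1, L_2, and G_{1/2}, G_{3/2} (equivalently by the positive part NS_+ of the Neveu-Schwarz algebra), and is an L_0-eigenvector of eigenvalue 4. -/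
/- The Neveu–Schwarz algebra acts on `M` by operators `L n` (Virasoro modes) and
`G n` (denoting the odd mode `G_{n+1/2}`, so `G (-1) = G_{-1/2}`), with the central
element acting by the scalar `c`.  `v0` is a highest weight vector of weight `(c, 0)`
annihilated by the positive part `NS₊` and (working modulo the singular vector) also
by `G_{-1/2}`. -/
/-- For `c = 7/10` (the `(p,q) = (5,3)` minimal model), the vector
`v = 3 L_{-4} 1 + 10 L_{-2}^2 1 - 15 G_{-5/2} G_{-3/2} 1` (here `G_{-5/2} = G (-3)`,
`G_{-3/2} = G (-2)`) is a singular vector: it is annihilated by the positive part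
`NS₊` (in particular by `L 1, L 2, G_{1/2}, G_{3/2}`) and is an `L₀`-eigenvector of
eigenvalue `4`. -/
theorem NS_singular_vector_c7_10
    {M : Type*} [AddCommGroup M] [Module ℂ M]
    (L G : ℤ → Module.End ℂ M) (c : ℂ) (hc : c = 7/10)
    (hLL : ∀ m n : ℤ, L m * L n - L n * L m =
      ((m : ℂ) - n) • L (m + n) +
      (if m + n = 0 then ((m : ℂ) ^ 3 - m) / 12 * c else 0) • (1 : Module.End ℂ M))
    (hGL : ∀ m n : ℤ, G m * L n - L n * G m =
      ((m : ℂ) + 1 / 2 - (n : ℂ) / 2) • G (m + n))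
    (hGG : ∀ a b : ℤ, G a * G b + G b * G a =
      (2 : ℂ) • L (a + b + 1) +
      (if a + b + 1 = 0 then (1 / 3 : ℂ) * a * ((a : ℂ) + 1) * c else 0) •
        (1 : Module.End ℂ M))
    (v0 : M) (hv0 : v0 ≠ 0)
    (hLv0 : ∀ n : ℤ, 0 ≤ n → L n v0 = 0)
    (hGv0 : ∀ a : ℤ, 0 ≤ a → G a v0 = 0)
    (hGhalf : G (-1) v0 = 0) :
    (∀ n : ℤ, 0 < n → L n ((3:ℂ) • L (-4) v0 + (10:ℂ) • L (-2) (L (-2) v0) - (15:ℂ) • G (-3) (G (-2) v0)) = 0) ∧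
    (∀ a : ℤ, 0 ≤ a → G a ((3:ℂ) • L (-4) v0 + (10:ℂ) • L (-2) (L (-2) v0) - (15:ℂ) • G (-3) (G (-2) v0)) = 0) ∧
    L 0 ((3:ℂ) • L (-4) v0 + (10:ℂ) • L (-2) (L (-2) v0) - (15:ℂ) • G (-3) (G (-2) v0)) = (4 : ℂ) • ((3:ℂ) • L (-4) v0 + (10:ℂ) • L (-2) (L (-2) v0) - (15:ℂ) • G (-3) (G (-2) v0)) := by
  subst hc
  -- pointwise commutation relations
  have LL : ∀ m n : ℤ, ∀ w : M, L m (L n w) =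
      ((m : ℂ) - n) • L (m + n) w +
      (if m + n = 0 then ((m : ℂ) ^ 3 - m) / 12 * (7/10 : ℂ) else 0) • w + L n (L m w) := by
    intro m n w
    have h := congrArg (fun f : Module.End ℂ M => f w) (hLL m n)
    simp only [LinearMap.sub_apply, Module.End.mul_apply, LinearMap.add_apply,
      LinearMap.smul_apply, Module.End.one_apply] at h
    rw [sub_eq_iff_eq_add] at h
    exact h
  have cGL : ∀ m n : ℤ, ∀ w : M, G m (L n w) =
      ((m : ℂ) + 1 / 2 - (n : ℂ) / 2) • G (m + n) w + L n (G m w) := by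
    intro m n w
    have h := congrArg (fun f : Module.End ℂ M => f w) (hGL m n)
    simp only [LinearMap.sub_apply, Module.End.mul_apply, LinearMap.smul_apply] at h
    rw [sub_eq_iff_eq_add] at h
    exact h
  have LG : ∀ n m : ℤ, ∀ w : M, L n (G m w) =
      G m (L n w) - ((m : ℂ) + 1 / 2 - (n : ℂ) / 2) • G (m + n) w := by
    intro n m w
    rw [cGL m n w]
    abel
  have GG : ∀ a b : ℤ, ∀ w : M, G a (G b w) =
      (2 : ℂ) • L (a + b + 1) w +
      (if a + b + 1 = 0 then (1 / 3 : ℂ) * a * ((a : ℂ) + 1) * (7/10 : ℂ) else 0) • w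
      - G b (G a w) := by
    intro a b w
    have h := congrArg (fun f : Module.End ℂ M => f w) (hGG a b)
    simp only [LinearMap.add_apply, Module.End.mul_apply, LinearMap.smul_apply,
      Module.End.one_apply] at h
    exact eq_sub_of_add_eq h
  -- L_{-1} kills v0
  have hLm1 : L (-1) v0 = 0 := by
    have h := GG (-1) (-1) v0
    rw [hGhalf, map_zero] at h
    norm_num at h
    exact smul_right_injective M (by norm_num : (2:ℂ) ≠ 0)
      (show (2:ℂ) • L (-1) v0 = (2:ℂ) • (0:M) by rw [smul_zero]; exact h.symm)
  have lv : ∀ n : ℤ, -1 ≤ n → L n v0 = 0 := by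
    intro n hn
    rcases (by omega : n = -1 ∨ 0 ≤ n) with rfl | h
    · exact hLm1
    · exact hLv0 n h
  have gv : ∀ a : ℤ, -1 ≤ a → G a v0 = 0 := by
    intro a ha
    rcases (by omega : a = -1 ∨ 0 ≤ a) with rfl | h
    · exact hGhalf
    · exact hGv0 a h
  -- specializations at v0
  have LLv : ∀ m n : ℤ, -1 ≤ m → L m (L n v0) =
      ((m : ℂ) - n) • L (m + n) v0 +
      (if m + n = 0 then ((m : ℂ) ^ 3 - m) / 12 * (7/10 : ℂ) else 0) • v0 := by
    intro m n hm
    rw [LL m n v0, lv m hm, map_zero, add_zero]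
  have GLv : ∀ m n : ℤ, -1 ≤ m → G m (L n v0) =
      ((m : ℂ) + 1 / 2 - (n : ℂ) / 2) • G (m + n) v0 := by
    intro m n hm
    rw [cGL m n v0, gv m hm, map_zero, add_zero]
  have LGv : ∀ n m : ℤ, -1 ≤ n → L n (G m v0) =
      - (((m : ℂ) + 1 / 2 - (n : ℂ) / 2)) • G (m + n) v0 := by
    intro n m hn
    rw [LG n m v0, lv n hn, map_zero, zero_sub, neg_smul]
  have GGv : ∀ a b : ℤ, -1 ≤ a → G a (G b v0) =
      (2 : ℂ) • L (a + b + 1) v0 +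
      (if a + b + 1 = 0 then (1 / 3 : ℂ) * a * ((a : ℂ) + 1) * (7/10 : ℂ) else 0) • v0 := by
    intro a b ha
    rw [GG a b v0, gv a ha, map_zero, sub_zero]
  -- G_{-3/2}^2 v0 = L_{-3} v0
  have tX : G (-2) (G (-2) v0) = L (-3) v0 := by
    have h := GG (-2) (-2) v0
    norm_num at h
    have h2 : G (-2) (G (-2) v0) + G (-2) (G (-2) v0) = (2:ℂ) • L (-3) v0 := by
      nth_rewrite 1 [h]; abel
    rw [← two_smul ℂ] at h2
    exact smul_right_injective M (by norm_num : (2:ℂ) ≠ 0) h2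
  -- frequently used depth-2 facts
  have t1 : L 1 (L (-2) v0) = 0 := by
    rw [LLv 1 (-2) (by norm_num)]; norm_num [hLm1]
  have s1 : L 2 (L (-2) v0) = (7/20 : ℂ) • v0 := by
    rw [LLv 2 (-2) (by norm_num)]; norm_num [hLv0 0 le_rfl]
  have s2 : L 0 (L (-2) v0) = (2:ℂ) • L (-2) v0 := by
    rw [LLv 0 (-2) (by norm_num)]; norm_num
  have c32 : L 0 (G (-2) v0) = (3/2 : ℂ) • G (-2) v0 := by
    rw [LGv 0 (-2) (by norm_num)]; norm_num
  have w4 : G 1 (G (-2) v0) = (7/15 : ℂ) • v0 := by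
    rw [GGv 1 (-2) (by norm_num)]; norm_num [hLv0 0 le_rfl]
  refine ⟨?_, ?_, ?_⟩
  · -- annihilated by L n, n > 0
    intro n hn
    rcases lt_or_ge n 5 with h5 | h5
    · interval_cases n
      · -- n = 1
        have t2 : L (-1) (L (-2) v0) = L (-3) v0 := by
          rw [LLv (-1) (-2) (by norm_num)]; norm_num
        have t3 : L 1 (G (-2) v0) = 0 := by
          rw [LGv 1 (-2) (by norm_num)]; norm_num [hGhalf]
        have e1 : L 1 (L (-4) v0) = (5:ℂ) • L (-3) v0 := by
          rw [LLv 1 (-4) (by norm_num)]; norm_num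
        have e2 : L 1 (L (-2) (L (-2) v0)) = (3:ℂ) • L (-3) v0 := by
          rw [LL 1 (-2) (L (-2) v0)]; norm_num [t1, t2]
        have e3 : L 1 (G (-3) (G (-2) v0)) = (3:ℂ) • L (-3) v0 := by
          rw [LG 1 (-3) (G (-2) v0)]; norm_num [t3, tX]
        rw [map_sub, map_add, map_smul, map_smul, map_smul, e1, e2, e3]
        module
      · -- n = 2
        have t3 : L 2 (G (-2) v0) = 0 := by
          rw [LGv 2 (-2) (by norm_num)]; norm_num [hGv0 0 le_rfl]
        have s4 : G (-1) (G (-2) v0) = (2:ℂ) • L (-2) v0 := by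
          rw [GGv (-1) (-2) (by norm_num)]; norm_num
        have e1 : L 2 (L (-4) v0) = (6:ℂ) • L (-2) v0 := by
          rw [LLv 2 (-4) (by norm_num)]; norm_num
        have e2 : L 2 (L (-2) (L (-2) v0)) = (87/10:ℂ) • L (-2) v0 := by
          rw [LL 2 (-2) (L (-2) v0)]; norm_num [s1, s2, map_smul]; module
        have e3 : L 2 (G (-3) (G (-2) v0)) = (7:ℂ) • L (-2) v0 := by
          rw [LG 2 (-3) (G (-2) v0)]; norm_num [t3, s4]; module
        rw [map_sub, map_add, map_smul, map_smul, map_smul, e1, e2, e3]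
        module
      · -- n = 3
        have u1 : L 3 (L (-2) v0) = 0 := by
          rw [LLv 3 (-2) (by norm_num)]; norm_num [hLv0 1 (by norm_num)]
        have u3 : L 3 (G (-2) v0) = 0 := by
          rw [LGv 3 (-2) (by norm_num)]; norm_num [hGv0 1 (by norm_num)]
        have u4 : G 0 (G (-2) v0) = 0 := by
          rw [GGv 0 (-2) (by norm_num)]; norm_num [hLm1]
        have e1 : L 3 (L (-4) v0) = 0 := by
          rw [LLv 3 (-4) (by norm_num)]; norm_num [hLm1]
        have e2 : L 3 (L (-2) (L (-2) v0)) = 0 := by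
          rw [LL 3 (-2) (L (-2) v0)]; norm_num [u1, t1]
        have e3 : L 3 (G (-3) (G (-2) v0)) = 0 := by
          rw [LG 3 (-3) (G (-2) v0)]; norm_num [u3, u4]
        rw [map_sub, map_add, map_smul, map_smul, map_smul, e1, e2, e3]
        module
      · -- n = 4
        have w1 : L 4 (L (-2) v0) = 0 := by
          rw [LLv 4 (-2) (by norm_num)]; norm_num [hLv0 2 (by norm_num)]
        have w3 : L 4 (G (-2) v0) = 0 := by
          rw [LGv 4 (-2) (by norm_num)]; norm_num [hGv0 2 (by norm_num)]
        have e1 : L 4 (L (-4) v0) = (7/2:ℂ) • v0 := by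
          rw [LLv 4 (-4) (by norm_num)]; norm_num [hLv0 0 le_rfl]
        have e2 : L 4 (L (-2) (L (-2) v0)) = (21/10:ℂ) • v0 := by
          rw [LL 4 (-2) (L (-2) v0)]; norm_num [w1, s1, map_smul]; module
        have e3 : L 4 (G (-3) (G (-2) v0)) = (21/10:ℂ) • v0 := by
          rw [LG 4 (-3) (G (-2) v0)]; norm_num [w3, w4]; module
        rw [map_sub, map_add, map_smul, map_smul, map_smul, e1, e2, e3]
        module
    · -- n ≥ 5
      have g1 : L n (L (-4) v0) = 0 := by
        rw [LLv n (-4) (by omega)]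
        rw [lv (n + -4) (by omega), if_neg (by omega)]
        simp
      have g2 : L n (L (-2) v0) = 0 := by
        rw [LLv n (-2) (by omega)]
        rw [lv (n + -2) (by omega), if_neg (by omega)]
        simp
      have g3 : L (n + -2) (L (-2) v0) = 0 := by
        rw [LLv (n + -2) (-2) (by omega)]
        rw [lv (n + -2 + -2) (by omega), if_neg (by omega)]
        simp
      have g4 : L n (G (-2) v0) = 0 := by
        rw [LGv n (-2) (by omega)]
        rw [gv (-2 + n) (by omega)]
        simp
      have g5 : G (n + -3) (G (-2) v0) = 0 := by
        rw [GGv (n + -3) (-2) (by omega)]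
        rw [lv (n + -3 + -2 + 1) (by omega), if_neg (by omega)]
        simp
      have e1 := g1
      have e2 : L n (L (-2) (L (-2) v0)) = 0 := by
        rw [LL n (-2) (L (-2) v0), g2, map_zero, g3, if_neg (by omega)]
        simp
      have e3 : L n (G (-3) (G (-2) v0)) = 0 := by
        rw [LG n (-3) (G (-2) v0), g4, map_zero]
        rw [(by omega : (-3 : ℤ) + n = n + -3), g5]
        simp
      rw [map_sub, map_add, map_smul, map_smul, map_smul, e1, e2, e3]
      simp
  · -- annihilated by G a, a ≥ 0
    intro a ha
    rcases lt_or_ge a 3 with h3 | h3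
    · interval_cases a
      · -- a = 0 (i.e. G_{1/2})
        have p1 : G 0 (L (-2) v0) = (3/2:ℂ) • G (-2) v0 := by
          rw [GLv 0 (-2) (by norm_num)]; norm_num
        have p2 : G (-2) (L (-2) v0) =
            (-1/2 : ℂ) • G (-4) v0 + L (-2) (G (-2) v0) := by
          rw [cGL (-2) (-2) v0]; norm_num
        have p3 : G 0 (G (-2) v0) = 0 := by
          rw [GGv 0 (-2) (by norm_num)]; norm_num [hLm1]
        have e1 : G 0 (L (-4) v0) = (5/2:ℂ) • G (-4) v0 := by
          rw [GLv 0 (-4) (by norm_num)]; norm_num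
        have e2 : G 0 (L (-2) (L (-2) v0)) =
            (3:ℂ) • L (-2) (G (-2) v0) - (3/4:ℂ) • G (-4) v0 := by
          rw [cGL 0 (-2) (L (-2) v0)]
          norm_num [p1, p2, map_add, map_smul]
          all_goals module
        have e3 : G 0 (G (-3) (G (-2) v0)) = (2:ℂ) • L (-2) (G (-2) v0) := by
          rw [GG 0 (-3) (G (-2) v0), p3]; norm_num
        rw [map_sub, map_add, map_smul, map_smul, map_smul, e1, e2, e3]
        module
      · -- a = 1 (i.e. G_{3/2})
        have p1 : G 1 (L (-2) v0) = 0 := by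
          rw [GLv 1 (-2) (by norm_num)]; norm_num [hGhalf]
        have p2 : G (-1) (L (-2) v0) = (1/2:ℂ) • G (-3) v0 := by
          rw [GLv (-1) (-2) (by norm_num)]; norm_num
        have p3 : L (-1) (G (-2) v0) = G (-3) v0 := by
          rw [LGv (-1) (-2) (by norm_num)]; norm_num
        have e1 : G 1 (L (-4) v0) = (7/2:ℂ) • G (-3) v0 := by
          rw [GLv 1 (-4) (by norm_num)]; norm_num
        have e2 : G 1 (L (-2) (L (-2) v0)) = (5/4:ℂ) • G (-3) v0 := by
          rw [cGL 1 (-2) (L (-2) v0)]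
          norm_num [p1, p2, map_add, map_smul]
          all_goals module
        have e3 : G 1 (G (-3) (G (-2) v0)) = (23/15:ℂ) • G (-3) v0 := by
          rw [GG 1 (-3) (G (-2) v0)]
          norm_num [w4, p3, map_smul]
          all_goals module
        rw [map_sub, map_add, map_smul, map_smul, map_smul, e1, e2, e3]
        module
      · -- a = 2 (i.e. G_{5/2})
        have p1 : G 2 (L (-2) v0) = 0 := by
          rw [GLv 2 (-2) (by norm_num)]; norm_num [hGv0 0 le_rfl]
        have p2 : G 0 (L (-2) v0) = (3/2:ℂ) • G (-2) v0 := by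
          rw [GLv 0 (-2) (by norm_num)]; norm_num
        have p4 : G 2 (G (-2) v0) = 0 := by
          rw [GGv 2 (-2) (by norm_num)]; norm_num [hLv0 1 (by norm_num)]
        have e1 : G 2 (L (-4) v0) = (9/2:ℂ) • G (-2) v0 := by
          rw [GLv 2 (-4) (by norm_num)]; norm_num
        have e2 : G 2 (L (-2) (L (-2) v0)) = (21/4:ℂ) • G (-2) v0 := by
          rw [cGL 2 (-2) (L (-2) v0)]
          norm_num [p1, p2, map_add, map_smul]
          all_goals module
        have e3 : G 2 (G (-3) (G (-2) v0)) = (22/5:ℂ) • G (-2) v0 := by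
          rw [GG 2 (-3) (G (-2) v0)]
          norm_num [p4, c32, map_smul]
          all_goals module
        rw [map_sub, map_add, map_smul, map_smul, map_smul, e1, e2, e3]
        module
    · -- a ≥ 3
      have q1 : G a (L (-4) v0) = 0 := by
        rw [GLv a (-4) (by omega), gv (a + -4) (by omega)]
        simp
      have q2 : G a (L (-2) v0) = 0 := by
        rw [GLv a (-2) (by omega), gv (a + -2) (by omega)]
        simp
      have q3 : G (a + -2) (L (-2) v0) = 0 := by
        rw [GLv (a + -2) (-2) (by omega), gv (a + -2 + -2) (by omega)]
        simp
      have q4 : G a (G (-2) v0) = 0 := by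
        rw [GGv a (-2) (by omega), lv (a + -2 + 1) (by omega), if_neg (by omega)]
        simp
      have q5 : L (a + -2) (G (-2) v0) = 0 := by
        rw [LGv (a + -2) (-2) (by omega), gv (-2 + (a + -2)) (by omega)]
        simp
      have e1 := q1
      have e2 : G a (L (-2) (L (-2) v0)) = 0 := by
        rw [cGL a (-2) (L (-2) v0), q2, map_zero, q3]
        simp
      have e3 : G a (G (-3) (G (-2) v0)) = 0 := by
        rw [GG a (-3) (G (-2) v0), q4, map_zero, if_neg (by omega)]
        rw [(by omega : a + -3 + 1 = a + -2), q5]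
        simp
      rw [map_sub, map_add, map_smul, map_smul, map_smul, e1, e2, e3]
      simp
  · -- L 0 eigenvector of eigenvalue 4
    have e1 : L 0 (L (-4) v0) = (4:ℂ) • L (-4) v0 := by
      rw [LLv 0 (-4) (by norm_num)]; norm_num
    have e2 : L 0 (L (-2) (L (-2) v0)) = (4:ℂ) • L (-2) (L (-2) v0) := by
      rw [LL 0 (-2) (L (-2) v0), s2]
      norm_num [map_smul]
      module
    have e3 : L 0 (G (-3) (G (-2) v0)) = (4:ℂ) • G (-3) (G (-2) v0) := by
      rw [LG 0 (-3) (G (-2) v0)]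
      norm_num [c32, map_smul]
      all_goals module
    rw [map_sub, map_add, map_smul, map_smul, map_smul, e1, e2, e3]
    module
end

section
/- Consider the Neveu-Schwarz module with c = -21/4 (the (p,q) = (8,2) case). The vector v = 3 G_{-7/2} 1 - 4 L_{-2} G_{-3/2} 1 in M(-21/4, 0) modulo G_{-1/2}1 is a singular vector: it is annihilated by the positive part NS_+ of the Neveu-Schwarz algebra and is an L_0-eigenvector of eigenvalue 7/2. -/
/- The Neveu–Schwarz algebra acts on `M` by operators `L n` (Virasoro modes) and
`G n` (denoting the odd mode `G_{n+1/2}`, so `G (-1) = G_{-1/2}`), with the central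
element acting by the scalar `c`.  `v0` is a highest weight vector of weight `(c, 0)`
annihilated by the positive part `NS₊` and (working modulo the singular vector) also
by `G_{-1/2}`. -/
/-- For `c = -21/4` (the `(p,q) = (8,2)` case), the vector
`v = 3 G_{-7/2} 1 - 4 L_{-2} G_{-3/2} 1` (here `G_{-7/2} = G (-4)`,
`G_{-3/2} = G (-2)`) is a singular vector: it is annihilated by the positive part
`NS₊` and is an `L₀`-eigenvector of eigenvalue `7/2`. -/
theorem NS_singular_vector_c_neg21_4
    {M : Type*} [AddCommGroup M] [Module ℂ M]
    (L G : ℤ → Module.End ℂ M) (c : ℂ) (hc : c = -21/4)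
    (hLL : ∀ m n : ℤ, L m * L n - L n * L m =
      ((m : ℂ) - n) • L (m + n) +
      (if m + n = 0 then ((m : ℂ) ^ 3 - m) / 12 * c else 0) • (1 : Module.End ℂ M))
    (hGL : ∀ m n : ℤ, G m * L n - L n * G m =
      ((m : ℂ) + 1 / 2 - (n : ℂ) / 2) • G (m + n))
    (hGG : ∀ a b : ℤ, G a * G b + G b * G a =
      (2 : ℂ) • L (a + b + 1) +
      (if a + b + 1 = 0 then (1 / 3 : ℂ) * a * ((a : ℂ) + 1) * c else 0) •
        (1 : Module.End ℂ M))
    (v0 : M) (hv0 : v0 ≠ 0)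
    (hLv0 : ∀ n : ℤ, 0 ≤ n → L n v0 = 0)
    (hGv0 : ∀ a : ℤ, 0 ≤ a → G a v0 = 0)
    (hGhalf : G (-1) v0 = 0) :
    (∀ n : ℤ, 0 < n → L n ((3:ℂ) • G (-4) v0 - (4:ℂ) • L (-2) (G (-2) v0)) = 0) ∧
    (∀ a : ℤ, 0 ≤ a → G a ((3:ℂ) • G (-4) v0 - (4:ℂ) • L (-2) (G (-2) v0)) = 0) ∧
    L 0 ((3:ℂ) • G (-4) v0 - (4:ℂ) • L (-2) (G (-2) v0)) = (7/2 : ℂ) • ((3:ℂ) • G (-4) v0 - (4:ℂ) • L (-2) (G (-2) v0)) := by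
  -- pointwise forms of the relations
  have pLL : ∀ (m n : ℤ) (x : M), L m (L n x) - L n (L m x) =
      ((m : ℂ) - n) • L (m + n) x +
      (if m + n = 0 then ((m : ℂ) ^ 3 - m) / 12 * c else 0) • x := by
    intro m n x
    have h := LinearMap.congr_fun (hLL m n) x
    simpa [LinearMap.sub_apply, LinearMap.add_apply, LinearMap.smul_apply,
      Module.End.mul_apply, Module.End.one_apply, LinearMap.zero_apply,
      apply_ite (fun f : Module.End ℂ M => f x), ite_smul, zero_smul] using h
  have pGL : ∀ (m n : ℤ) (x : M), G m (L n x) - L n (G m x) =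
      ((m : ℂ) + 1 / 2 - (n : ℂ) / 2) • G (m + n) x := by
    intro m n x
    have h := LinearMap.congr_fun (hGL m n) x
    simpa [LinearMap.sub_apply, LinearMap.smul_apply, Module.End.mul_apply] using h
  have pGG : ∀ (a b : ℤ) (x : M), G a (G b x) + G b (G a x) =
      (2 : ℂ) • L (a + b + 1) x +
      (if a + b + 1 = 0 then (1 / 3 : ℂ) * a * ((a : ℂ) + 1) * c else 0) • x := by
    intro a b x
    have h := LinearMap.congr_fun (hGG a b) x
    simpa [LinearMap.add_apply, LinearMap.smul_apply, Module.End.mul_apply,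
      Module.End.one_apply, LinearMap.zero_apply,
      apply_ite (fun f : Module.End ℂ M => f x), ite_smul, zero_smul] using h
  -- extended vanishing
  have hG' : ∀ a : ℤ, -1 ≤ a → G a v0 = 0 := by
    intro a ha
    rcases eq_or_lt_of_le ha with h | h
    · rw [← h]; exact hGhalf
    · exact hGv0 a (by omega)
  have hLneg1 : L (-1) v0 = 0 := by
    have h := pGG (-1) (-1) v0
    rw [hGhalf, map_zero] at h
    norm_num at h
    have h2 : L (-1) v0 = (2:ℂ)⁻¹ • ((2:ℂ) • L (-1) v0) := by
      rw [smul_smul]; norm_num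
    rw [h2, ← h, smul_zero]
  have hL' : ∀ n : ℤ, -1 ≤ n → L n v0 = 0 := by
    intro n hn
    rcases eq_or_lt_of_le hn with h | h
    · rw [← h]; exact hLneg1
    · exact hLv0 n (by omega)
  -- solved commutation forms on v0 and general vectors
  -- L n (G m v0) for n ≥ -1
  have hLGv : ∀ (n m k : ℤ), -1 ≤ n → m + n = k →
      L n (G m v0) = (-((m : ℂ) + 1 / 2 - (n : ℂ) / 2)) • G k v0 := by
    intro n m k hn hk
    have h := pGL m n v0
    rw [hL' n hn, map_zero, hk] at h
    have : L n (G m v0) = 0 - ((m : ℂ) + 1 / 2 - (n : ℂ) / 2) • G k v0 := by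
      rw [← h]; abel
    rw [this]; module
  -- G a (G b v0) for a ≥ -1, a + b + 1 = k ≠ 0
  have hGGv0 : ∀ (a b k : ℤ), -1 ≤ a → a + b + 1 = k → k ≠ 0 →
      G a (G b v0) = (2 : ℂ) • L k v0 := by
    intro a b k ha hk hk0
    have h := pGG a b v0
    rw [hG' a ha, map_zero, add_zero, hk, if_neg hk0] at h
    rw [h]; module
  -- G a (G b v0) for a ≥ -1, a + b + 1 = 0
  have hGGv1 : ∀ (a b : ℤ), -1 ≤ a → a + b + 1 = 0 →
      G a (G b v0) = ((1 / 3 : ℂ) * a * ((a : ℂ) + 1) * c) • v0 := by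
    intro a b ha hk
    have h := pGG a b v0
    rw [hG' a ha, map_zero, add_zero, hk, if_pos rfl, hLv0 0 le_rfl, smul_zero,
      zero_add] at h
    exact h
  -- G (-2) (G (-2) v0) = L (-3) v0
  have hG22 : G (-2) (G (-2) v0) = L (-3) v0 := by
    have h := pGG (-2) (-2) v0
    norm_num at h
    have h2 : (2:ℂ) • G (-2) (G (-2) v0) = (2:ℂ) • L (-3) v0 := by
      rw [two_smul]; exact h
    have h3 : G (-2) (G (-2) v0) = (2:ℂ)⁻¹ • ((2:ℂ) • G (-2) (G (-2) v0)) := by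
      rw [smul_smul]; norm_num
    rw [h3, h2, smul_smul]; norm_num
  -- L n (L (-2) x)
  have hLLx : ∀ (n : ℤ) (x : M), L n (L (-2) x) =
      L (-2) (L n x) + ((n : ℂ) + 2) • L (n + -2) x +
      (if n + -2 = 0 then ((n : ℂ) ^ 3 - n) / 12 * c else 0) • x := by
    intro n x
    have h := pLL n (-2) x
    have e : ((n : ℂ) - (-2 : ℤ)) = (n : ℂ) + 2 := by push_cast; ring
    rw [e] at h
    rw [add_assoc, ← h]; abel
  -- G a (L (-2) x)
  have hGLx : ∀ (a : ℤ) (x : M), G a (L (-2) x) =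
      L (-2) (G a x) + ((a : ℂ) + 3 / 2) • G (a + -2) x := by
    intro a x
    have h := pGL a (-2) x
    have e : ((a : ℂ) + 1 / 2 - ((-2 : ℤ) : ℂ) / 2) = (a : ℂ) + 3 / 2 := by
      push_cast; ring
    rw [e] at h
    rw [← h]; abel
  refine ⟨?_, ?_, ?_⟩
  · -- L n, n > 0
    intro n hn
    rw [map_sub, map_smul, map_smul]
    rw [hLGv n (-4) (n - 4) (by omega) (by omega)]
    rw [hLLx n (G (-2) v0)]
    rw [hLGv n (-2) (n - 2) (by omega) (by omega)]
    rw [hLGv (n + -2) (-2) (n - 4) (by omega) (by omega)]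
    obtain h3 | h4 : n ≤ 3 ∨ 4 ≤ n := by omega
    · interval_cases n
      · -- n = 1
        norm_num
        rw [hGhalf]
        simp only [smul_zero, map_zero, zero_add]
        module
      · -- n = 2
        norm_num
        rw [hGv0 0 le_rfl, hc]
        simp only [smul_zero, map_zero, zero_add]
        module
      · -- n = 3
        norm_num
        rw [hGhalf, hGv0 1 (by norm_num)]
        simp only [smul_zero, map_zero, zero_add]
        simp
    · rw [hG' (n - 4) (by omega), hG' (n - 2) (by omega), if_neg (by omega)]
      simp
  · -- G a, a ≥ 0
    intro a ha
    rw [map_sub, map_smul, map_smul]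
    rw [hGLx a (G (-2) v0)]
    rcases eq_or_lt_of_le ha with h0 | h1
    · -- a = 0
      subst h0
      rw [hGGv0 0 (-4) (-3) (by norm_num) (by norm_num) (by norm_num),
           hGGv0 0 (-2) (-1) (by norm_num) (by norm_num) (by norm_num), hLneg1]
      rw [smul_zero, map_zero, show (0:ℤ) + -2 = -2 from rfl, hG22]
      push_cast
      module
    · have ha1 : (1:ℤ) ≤ a := h1
      obtain h3 | h4 : a ≤ 3 ∨ 4 ≤ a := by omega
      · interval_cases a
        · -- a = 1
          rw [hGGv0 1 (-4) (-2) (by norm_num) (by norm_num) (by norm_num)]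
          rw [hGGv1 1 (-2) (by norm_num) (by norm_num)]
          rw [hGGv0 (1 + -2) (-2) (-2) (by norm_num) (by norm_num) (by norm_num)]
          rw [hc]
          rw [map_smul]
          push_cast
          module
        · -- a = 2
          rw [hGGv0 2 (-4) (-1) (by norm_num) (by norm_num) (by norm_num)]
          rw [hGGv0 2 (-2) 1 (by norm_num) (by norm_num) (by norm_num)]
          rw [hGGv0 (2 + -2) (-2) (-1) (by norm_num) (by norm_num) (by norm_num)]
          rw [hLneg1, hLv0 1 (by norm_num)]
          simp
        · -- a = 3
          rw [hGGv1 3 (-4) (by norm_num) (by norm_num)]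
          rw [hGGv0 3 (-2) 2 (by norm_num) (by norm_num) (by norm_num)]
          rw [hGGv1 (3 + -2) (-2) (by norm_num) (by norm_num)]
          rw [hLv0 2 (by norm_num)]
          simp only [smul_zero, map_zero, map_smul]
          rw [hc]
          push_cast
          module
      · rw [hGGv0 a (-4) (a - 3) (by omega) (by omega) (by omega)]
        rw [hGGv0 a (-2) (a - 1) (by omega) (by omega) (by omega)]
        rw [hGGv0 (a + -2) (-2) (a - 3) (by omega) (by omega) (by omega)]
        rw [hLv0 (a - 3) (by omega), hLv0 (a - 1) (by omega)]
        simp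
  · -- L 0
    rw [map_sub, map_smul, map_smul]
    rw [hLGv 0 (-4) (-4) (by norm_num) (by norm_num)]
    rw [hLLx 0 (G (-2) v0)]
    rw [hLGv 0 (-2) (-2) (by norm_num) (by norm_num)]
    norm_num
    module
end

section
/- Let F be the fermionic Fock space SVOA generated by l neutral free fermion fields Φ^a(z) = sum_{i in 1/2 + Z} φ_i^a z^{-i-1/2} with relations [φ_i^a, φ_j^b]_+ = δ_{a,b} δ_{i,j} (for i + j = 0; all other anticommutators zero), with vacuum |0⟩ annihilated by φ_i^a for i > 0. Then the Zhu algebra A(F) = F/O(F) is isomorphic to C. Explicitly, O(F) = ⊕_{n in (1/2)N} F_n. -/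
noncomputable section

/-- A vertex operator superalgebra (SVOA), recorded by its mode operators
`mode a n = a(n)` (the coefficients of the vertex operator
`Y(a,z) = ∑ₙ a(n) z^{-n-1}`), its `½ℤ₊`-grading `piece q` (`piece q` is the degree-`q`
homogeneous component `V_q`), the vacuum `1` and the Virasoro element `ω`.
The axioms listed are the standard consequences of the SVOA axioms used by Kac–Wang. -/
structure SVOA (V : Type*) [AddCommGroup V] [Module ℂ V] where
  mode : V → ℤ → V →ₗ[ℂ] V
  piece : ℚ → Submodule ℂ V
  vacuum : V
  omega : V
  piece_support : ∀ q : ℚ, (∀ n : ℕ, q ≠ (n : ℚ) / 2) → piece q = ⊥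
  sup_pieces : (⨆ n : ℕ, piece ((n : ℚ) / 2)) = ⊤
  vacuum_mem : vacuum ∈ piece 0
  omega_mem : omega ∈ piece 2
  mode_grading : ∀ (d m : ℚ) (n : ℤ) (a b : V), a ∈ piece d → b ∈ piece m →
    mode a n b ∈ piece (d + m - n - 1)
  mode_vacuum : ∀ (a : V) (n : ℤ), 0 ≤ n → mode a n vacuum = 0
  create_vacuum : ∀ a : V, mode a (-1) vacuum = a
  vacuum_field : ∀ (n : ℤ) (b : V), mode vacuum n b = if n = -1 then b else 0
  L0_diag : ∀ (d : ℚ) (a : V), a ∈ piece d → mode omega 1 a = (d : ℂ) • a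
  Lneg1_mode : ∀ (a : V) (n : ℤ) (b : V),
    mode (mode omega 0 a) n b = (-n : ℂ) • mode a (n - 1) b

namespace SVOA

variable {V : Type*} [AddCommGroup V] [Module ℂ V]

/-- `res S a K m b = Res_z (Y(a,z) (z+1)^K z^{-m} b) = ∑_{i=0}^{K} (K choose i) a(i-m) b`. -/
def res (S : SVOA V) (a : V) (K : ℕ) (m : ℤ) (b : V) : V :=
  ∑ i ∈ Finset.range (K + 1), (K.choose i : ℂ) • S.mode a ((i : ℤ) - m) b

/-- The even part `V_0̄ = ⊕_{n ∈ ℤ₊} V_n`. -/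
def even (S : SVOA V) : Submodule ℂ V := ⨆ n : ℕ, S.piece (n : ℚ)

/-- The odd part `V_1̄ = ⊕_{n ∈ ½+ℤ₊} V_n`. -/
def odd (S : SVOA V) : Submodule ℂ V := ⨆ n : ℕ, S.piece ((n : ℚ) + 1 / 2)

/-- Zhu's subspace `O(V)`: the span of the circle products
`a ∘ b = Res_z (Y(a,z) (z+1)^{deg a} z^{-2} b)` for homogeneous even `a` and
`a ∘ b = Res_z (Y(a,z) (z+1)^{deg a - 1/2} z^{-1} b)` for homogeneous odd `a`. -/
def OV (S : SVOA V) : Submodule ℂ V :=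
  Submodule.span ℂ
    ({x | ∃ (K : ℕ) (a b : V), a ∈ S.piece (K : ℚ) ∧ x = S.res a K 2 b} ∪
     {x | ∃ (K : ℕ) (a b : V), a ∈ S.piece ((K : ℚ) + 1 / 2) ∧ x = S.res a K 1 b})

end SVOA
section Helpers

variable {V : Type*} [AddCommGroup V] [Module ℂ V]

private lemma choose_coef_id (K i : ℕ) (hi : i ≤ K) (n : ℤ) :
    ((K + 1).choose (i + 1) : ℂ) * ((n : ℂ) - ((i : ℂ) + 1))
      = (n : ℂ) * (K.choose (i + 1) : ℂ)
        + ((n : ℂ) - (K : ℂ) - 1) * (K.choose i : ℂ) := by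
  have h : K.choose (i + 1) * (i + 1) = K.choose i * (K - i) := Nat.choose_succ_right_eq K i
  have hc : (K.choose (i + 1) : ℂ) * ((i : ℂ) + 1) = (K.choose i : ℂ) * ((K : ℂ) - (i : ℂ)) := by
    have := congrArg (Nat.cast : ℕ → ℂ) h
    push_cast [Nat.cast_sub hi] at this
    exact this
  rw [Nat.choose_succ_succ]
  push_cast
  linear_combination -hc

/-- The derivative relation: `Res Y(L₋₁a,z)(1+z)^{K+1} z^{-n} b
  = n Res Y(a,z)(1+z)^K z^{-n-1} b + (n-K-1) Res Y(a,z)(1+z)^K z^{-n} b`. -/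
lemma SVOA.res_Lneg1 (S : SVOA V) (a b : V) (K : ℕ) (n : ℤ) :
    S.res (S.mode S.omega 0 a) (K + 1) n b
      = (n : ℂ) • S.res a K (n + 1) b
        + ((n : ℂ) - (K : ℂ) - 1) • S.res a K n b := by
  have hmode : ∀ i : ℕ, S.mode (S.mode S.omega 0 a) ((i : ℤ) - n) b
      = (((n : ℂ) - (i : ℂ))) • S.mode a ((i : ℤ) - n - 1) b := by
    intro i
    rw [S.Lneg1_mode a ((i : ℤ) - n) b]
    congr 1
    push_cast
    ring
  unfold SVOA.res
  rw [Finset.smul_sum, Finset.smul_sum]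
  simp only [hmode, smul_smul]
  rw [Finset.sum_range_succ'
    (fun i => (((K + 1).choose i : ℂ) * ((n : ℂ) - (i : ℂ))) • S.mode a ((i : ℤ) - n - 1) b)
    (K + 1)]
  rw [Finset.sum_range_succ'
    (fun i => ((n : ℂ) * (K.choose i : ℂ)) • S.mode a ((i : ℤ) - (n + 1)) b) K]
  have hextend :
      (∑ i ∈ Finset.range (K + 1),
        ((n : ℂ) * (K.choose (i + 1) : ℂ)) • S.mode a (((i + 1 : ℕ) : ℤ) - (n + 1)) b)
      = ∑ i ∈ Finset.range K,
        ((n : ℂ) * (K.choose (i + 1) : ℂ)) • S.mode a (((i + 1 : ℕ) : ℤ) - (n + 1)) b := by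
    rw [Finset.sum_range_succ]
    simp [Nat.choose_succ_self]
  rw [← hextend]
  have hmain :
      (∑ i ∈ Finset.range (K + 1),
          (((K + 1).choose (i + 1) : ℂ) * ((n : ℂ) - ((i + 1 : ℕ) : ℂ)))
            • S.mode a (((i + 1 : ℕ) : ℤ) - n - 1) b)
      = (∑ i ∈ Finset.range (K + 1),
          ((n : ℂ) * (K.choose (i + 1) : ℂ)) • S.mode a (((i + 1 : ℕ) : ℤ) - (n + 1)) b)
        + ∑ i ∈ Finset.range (K + 1),
            (((n : ℂ) - (K : ℂ) - 1) * (K.choose i : ℂ)) • S.mode a ((i : ℤ) - n) b := by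
    rw [← Finset.sum_add_distrib]
    refine Finset.sum_congr rfl fun i hi => ?_
    have hiK : i ≤ K := Nat.lt_succ_iff.mp (Finset.mem_range.mp hi)
    have h1 : ((i + 1 : ℕ) : ℤ) - n - 1 = (i : ℤ) - n := by push_cast; ring
    have h2 : ((i + 1 : ℕ) : ℤ) - (n + 1) = (i : ℤ) - n := by push_cast; ring
    rw [h1, h2, ← add_smul]
    congr 1
    have h3 : ((i + 1 : ℕ) : ℂ) = (i : ℂ) + 1 := by push_cast; ring
    rw [h3]
    exact choose_coef_id K i hiK n
  rw [hmain]
  have h0 : (((K + 1).choose 0 : ℂ) * ((n : ℂ) - ((0 : ℕ) : ℂ)))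
        • S.mode a (((0 : ℕ) : ℤ) - n - 1) b
      = ((n : ℂ) * (K.choose 0 : ℂ)) • S.mode a (((0 : ℕ) : ℤ) - (n + 1)) b := by
    have : ((0 : ℕ) : ℤ) - n - 1 = ((0 : ℕ) : ℤ) - (n + 1) := by ring
    rw [this]
    norm_num
  rw [h0]
  abel

end Helpers


/-- Let `F` be the SVOA of `l` neutral free fermions, generated by
the fields `Φᵃ(z) = Y(gₐ, z)` of the degree-`1/2` vectors `gₐ = φᵃ_{-1/2}|0⟩`
(so every element of positive degree is a span of elements `φᵃ_{-1/2-n} v = gₐ(-n-1) v`,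
the degree-`0` piece is spanned by the vacuum, and the vacuum is not of positive degree).
Then `O(F) = ⊕_{n ∈ ½ℕ} F_n` (the sum of all positive-degree pieces) and the Zhu
algebra `A(F) = F/O(F)` is isomorphic to `ℂ`. -/
theorem freeFermion_zhu_algebra {F : Type*} [AddCommGroup F] [Module ℂ F] (S : SVOA F)
    (l : ℕ) (g : Fin l → F) (hg : ∀ a, g a ∈ S.piece (1 / 2))
    (hvac : S.piece 0 = Submodule.span ℂ {S.vacuum})
    (hvac_ne : S.vacuum ∉ (⨆ k : ℕ, S.piece (((k : ℚ) + 1) / 2)))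
    (hgen : (⨆ k : ℕ, S.piece (((k : ℚ) + 1) / 2)) ≤
      Submodule.span ℂ {x | ∃ (a : Fin l) (n : ℕ) (v : F),
        x = S.mode (g a) (-(n : ℤ) - 1) v}) :
    S.OV = (⨆ k : ℕ, S.piece (((k : ℚ) + 1) / 2)) ∧
    Nonempty ((F ⧸ S.OV) ≃ₗ[ℂ] ℂ) := by
  set P : Submodule ℂ F := ⨆ k : ℕ, S.piece (((k : ℚ) + 1) / 2) with hPdef
  have hpiece_le : ∀ k : ℕ, S.piece (((k : ℚ) + 1) / 2) ≤ P := fun k => by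
    rw [hPdef]; exact le_iSup (fun k : ℕ => S.piece (((k : ℚ) + 1) / 2)) k
  -- arbitrary vectors: membership of mode images in P
  have hmodeP : ∀ (a : F) (nn : ℤ),
      (∀ (m : ℕ) (c : F), c ∈ S.piece ((m : ℚ) / 2) → S.mode a nn c ∈ P) →
      ∀ b : F, S.mode a nn b ∈ P := by
    intro a nn h b
    have hb : b ∈ (⊤ : Submodule ℂ F) := trivial
    rw [← S.sup_pieces] at hb
    have hle : (⨆ m : ℕ, S.piece ((m : ℚ) / 2)) ≤ P.comap (S.mode a nn) := by
      refine iSup_le fun m => fun c hc => h m c hc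
    exact hle hb
  -- Step A : O(V) ≤ P
  have hOV_le : S.OV ≤ P := by
    rw [SVOA.OV, Submodule.span_le]
    rintro x (⟨K, a, b, ha, rfl⟩ | ⟨K, a, b, ha, rfl⟩)
    · -- even case
      unfold SVOA.res
      refine Submodule.sum_mem _ fun i hi => Submodule.smul_mem _ _ ?_
      have hiK : i ≤ K := Nat.lt_succ_iff.mp (Finset.mem_range.mp hi)
      refine hmodeP a ((i : ℤ) - 2) (fun m c hc => ?_) b
      have hmem := S.mode_grading (K : ℚ) ((m : ℚ) / 2) ((i : ℤ) - 2) a c ha hc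
      have hk : ((K : ℚ) + (m : ℚ) / 2 - (((i : ℤ) - 2 : ℤ) : ℚ) - 1)
          = (((2 * (K - i) + m + 1 : ℕ) : ℚ) + 1) / 2 := by
        push_cast [Nat.cast_sub hiK]
        ring
      rw [hk] at hmem
      exact hpiece_le _ hmem
    · -- odd case
      unfold SVOA.res
      refine Submodule.sum_mem _ fun i hi => Submodule.smul_mem _ _ ?_
      have hiK : i ≤ K := Nat.lt_succ_iff.mp (Finset.mem_range.mp hi)
      refine hmodeP a ((i : ℤ) - 1) (fun m c hc => ?_) b
      have hmem := S.mode_grading ((K : ℚ) + 1 / 2) ((m : ℚ) / 2) ((i : ℤ) - 1) a c ha hc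
      have hk : (((K : ℚ) + 1 / 2) + (m : ℚ) / 2 - (((i : ℤ) - 1 : ℤ) : ℚ) - 1)
          = (((2 * (K - i) + m : ℕ) : ℚ) + 1) / 2 := by
        push_cast [Nat.cast_sub hiK]
        ring
      rw [hk] at hmem
      exact hpiece_le _ hmem
  -- Step B : all higher circle products of odd elements lie in O(V)
  have hodd_res : ∀ (m K : ℕ) (a : F), a ∈ S.piece ((K : ℚ) + 1 / 2) →
      ∀ b : F, S.res a K ((m : ℤ) + 1) b ∈ S.OV := by
    intro m
    induction m with
    | zero =>
      intro K a ha b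
      have h1 : ((0 : ℕ) : ℤ) + 1 = 1 := by norm_num
      rw [h1]
      exact Submodule.subset_span (Or.inr ⟨K, a, b, ha, rfl⟩)
    | succ m ih =>
      intro K a ha b
      have ha' : S.mode S.omega 0 a ∈ S.piece (((K + 1 : ℕ) : ℚ) + 1 / 2) := by
        have h := S.mode_grading 2 ((K : ℚ) + 1 / 2) 0 S.omega a S.omega_mem ha
        have he : ((2 : ℚ) + ((K : ℚ) + 1 / 2) - ((0 : ℤ) : ℚ) - 1)
            = ((K + 1 : ℕ) : ℚ) + 1 / 2 := by push_cast; ring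
        rwa [he] at h
      have h1 := ih (K + 1) (S.mode S.omega 0 a) ha' b
      have h2 := ih K a ha b
      set nz : ℤ := (m : ℤ) + 1 with hnz
      have hne : ((nz : ℤ) : ℂ) ≠ 0 := by
        have : (0 : ℤ) < nz := by omega
        exact_mod_cast (by exact_mod_cast this.ne' : (nz : ℂ) ≠ 0)
      have hrec := S.res_Lneg1 a b K nz
      have heq : S.res a K (nz + 1) b
          = ((nz : ℂ))⁻¹ • (S.res (S.mode S.omega 0 a) (K + 1) nz b
              - (((nz : ℂ)) - (K : ℂ) - 1) • S.res a K nz b) := by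
        rw [hrec, add_sub_cancel_right, smul_smul, inv_mul_cancel₀ hne, one_smul]
      have hidx : ((m + 1 : ℕ) : ℤ) + 1 = nz + 1 := by push_cast [hnz]; ring
      rw [hidx, heq]
      exact Submodule.smul_mem _ _
        (Submodule.sub_mem _ h1 (Submodule.smul_mem _ _ h2))
  -- Step B' : P ≤ O(V)
  have hgenOV : {x | ∃ (a : Fin l) (n : ℕ) (v : F),
      x = S.mode (g a) (-(n : ℤ) - 1) v} ⊆ (S.OV : Set F) := by
    rintro x ⟨a, n, v, rfl⟩
    have hga : g a ∈ S.piece (((0 : ℕ) : ℚ) + 1 / 2) := by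
      have : (((0 : ℕ) : ℚ) + 1 / 2) = 1 / 2 := by norm_num
      rw [this]; exact hg a
    have h := hodd_res n 0 (g a) hga v
    have hres : S.res (g a) 0 ((n : ℤ) + 1) v = S.mode (g a) (-(n : ℤ) - 1) v := by
      unfold SVOA.res
      rw [Finset.sum_range_one]
      have : ((0 : ℕ) : ℤ) - ((n : ℤ) + 1) = -(n : ℤ) - 1 := by ring
      rw [this]
      norm_num
    rwa [hres] at h
  have hP_le : P ≤ S.OV := le_trans hgen (Submodule.span_le.mpr hgenOV)
  have hPeq : S.OV = P := le_antisymm hOV_le hP_le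
  refine ⟨hPeq, ?_⟩
  rw [hPeq]
  -- Step C : the quotient is 1-dimensional
  set v : F ⧸ P := P.mkQ S.vacuum with hv
  have hv0 : v ≠ 0 := by
    intro h
    exact hvac_ne ((Submodule.Quotient.mk_eq_zero P).mp h)
  have hF : (⊤ : Submodule ℂ F) = Submodule.span ℂ {S.vacuum} ⊔ P := by
    refine le_antisymm ?_ le_top
    rw [← S.sup_pieces]
    refine iSup_le fun n => ?_
    cases n with
    | zero =>
      have h0 : (((0 : ℕ) : ℚ) / 2) = 0 := by norm_num
      rw [h0, hvac]
      exact le_sup_left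
    | succ k =>
      have hk : (((k + 1 : ℕ) : ℚ) / 2) = ((k : ℚ) + 1) / 2 := by push_cast; ring
      rw [hk]
      exact (hpiece_le k).trans le_sup_right
  have hbot : Submodule.map P.mkQ P = ⊥ := by
    refine le_bot_iff.mp (Submodule.map_le_iff_le_comap.mpr ?_)
    exact le_of_eq (P.ker_mkQ).symm
  have htop : Submodule.span ℂ {v} = ⊤ := by
    have h1 : (⊤ : Submodule ℂ (F ⧸ P))
        = Submodule.span ℂ {v} ⊔ Submodule.map P.mkQ P := by
      rw [← Submodule.range_mkQ P, ← Submodule.map_top, hF, Submodule.map_sup,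
        Submodule.map_span, Set.image_singleton]
    rw [h1, hbot, sup_bot_eq]
  set f : ℂ →ₗ[ℂ] (F ⧸ P) := LinearMap.toSpanSingleton ℂ (F ⧸ P) v with hf
  have hfapp : ∀ c : ℂ, f c = c • v := fun c => rfl
  have hinj : Function.Injective f := by
    intro c d h
    by_contra hne
    have hcd : c - d ≠ 0 := sub_ne_zero.mpr hne
    have hz : (c - d) • v = 0 := by
      rw [sub_smul, ← hfapp, ← hfapp, h, sub_self]
    apply hv0
    calc v = (c - d)⁻¹ • ((c - d) • v) := by
            rw [smul_smul, inv_mul_cancel₀ hcd, one_smul]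
      _ = 0 := by rw [hz, smul_zero]
  have hsurj : Function.Surjective f := by
    rw [← LinearMap.range_eq_top, hf, ← LinearMap.span_singleton_eq_range, htop]
  exact ⟨(LinearEquiv.ofBijective f ⟨hinj, hsurj⟩).symm⟩
end
end
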